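/- Let V be a real vector space of finite dimension d. Define the operator λ on polyforms by λ(Ψ_m) = (−1)^{⌊m/2⌋} Ψ_m on each homogeneous m-form component Ψ_m, and define the Mukai pairing of polyforms Ω, Ψ ∈ Λ•V* as ⟨Ω, Ψ⟩_M = (Ω ∧ λ(Ψ))_top, the degree-d component of Ω ∧ λ(Ψ) (an element of Λ^dV*). Then the Mukai pairing is invariant under B-transforms: for every alternating 2-form ω on V, ⟨e^ω ∧ Ω, e^ω ∧ Ψ⟩_M = ⟨Ω, Ψ⟩_M, where e^ω = Σ_k ω^{∧k}/k!. -/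

import Mathlib

open Module

set_option synthInstance.maxHeartbeats 1000000
set_option maxHeartbeats 1000000

/-- The operator `λ` on polyforms, multiplying the degree-`m` component by `(−1)^⌊m/2⌋`.
(Components of degree `m > dim V` vanish, so the finite sum suffices.) -/
noncomputable def lambdaOp {V : Type*} [AddCommGroup V] [Module ℝ V] [FiniteDimensional ℝ V]
    (Ψ : ExteriorAlgebra ℝ (Dual ℝ V)) : ExteriorAlgebra ℝ (Dual ℝ V) :=
  ∑ m ∈ Finset.range (Module.finrank ℝ V + 1),
    ((-1 : ℝ) ^ (m / 2)) • GradedAlgebra.proj (fun i : ℕ => ⋀[ℝ]^i (Dual ℝ V)) m Ψ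

/-- The Mukai pairing `⟨Ω,Ψ⟩_M = (Ω ∧ λ(Ψ))_top`, the degree-`d` component
(`d = dim V`) of `Ω ∧ λ(Ψ)`. -/
noncomputable def mukaiPairing {V : Type*} [AddCommGroup V] [Module ℝ V] [FiniteDimensional ℝ V]
    (Ω Ψ : ExteriorAlgebra ℝ (Dual ℝ V)) : ExteriorAlgebra ℝ (Dual ℝ V) :=
  GradedAlgebra.proj (fun i : ℕ => ⋀[ℝ]^i (Dual ℝ V)) (Module.finrank ℝ V) (Ω * lambdaOp Ψ)

/-- The exponential `e^ω = Σ_k ω^k / k!` of a 2-form `ω ∈ Λ²V*` (a finite sum). -/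
noncomputable def expForm {V : Type*} [AddCommGroup V] [Module ℝ V]
    [FiniteDimensional ℝ V] (ω : ExteriorAlgebra ℝ (Dual ℝ V)) :
    ExteriorAlgebra ℝ (Dual ℝ V) :=
  ∑ k ∈ Finset.range (Module.finrank ℝ V + 1), ((Nat.factorial k : ℝ)⁻¹) • ω ^ k

/-!
A 2-form `ω` has even degree, so it is central in the exterior algebra, and it is nilpotent, so
`e^ω e^{-ω} = 1`. Since `ω^k ∧ Ψ_m` has degree `2k + m` and `⌊(2k + m)/2⌋ = k + ⌊m/2⌋`, the
operator `λ` turns `e^ω ∧ Ψ` into `e^{-ω} ∧ λ(Ψ)`. Hence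
`(e^ω ∧ Ω) ∧ λ(e^ω ∧ Ψ) = e^ω ∧ e^{-ω} ∧ Ω ∧ λ(Ψ) = Ω ∧ λ(Ψ)` before taking the top component.
-/

namespace ExteriorAlgebra

variable {R M : Type*} [CommRing R] [AddCommGroup M] [Module R M]

theorem mul_ι_of_mem_exteriorPower {n : ℕ} {x : ExteriorAlgebra R M} (hx : x ∈ ⋀[R]^n M)
    (v : M) : x * ι R v = ((-1 : R) ^ n) • (ι R v * x) := by
  induction hx using Submodule.pow_induction_on_left' with
  | algebraMap r => simp [Algebra.commutes]
  | add x y i _ _ ihx ihy => simp only [add_mul, mul_add, ihx, ihy, smul_add]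
  | mem_mul m hm i z _ ih =>
    obtain ⟨a, rfl⟩ := hm
    have hanti : ι R a * ι R v = -(ι R v * ι R a) := eq_neg_of_add_eq_zero_left (ι_add_mul_swap a v)
    rw [mul_assoc, ih, mul_smul_comm, ← mul_assoc, hanti, pow_succ]
    simp [mul_assoc, mul_comm]

theorem commute_of_mem_exteriorPower_of_even {n : ℕ} (hn : Even n) {x : ExteriorAlgebra R M}
    (hx : x ∈ ⋀[R]^n M) (y : ExteriorAlgebra R M) : Commute x y := by
  induction y using CliffordAlgebra.induction with
  | algebraMap r => exact (Algebra.commutes r x).symm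
  | ι v => simp [Commute, SemiconjBy, mul_ι_of_mem_exteriorPower hx v, hn.neg_one_pow]
  | mul y z hy hz => exact hy.mul_right hz
  | add y z hy hz => exact hy.add_right hz

theorem pow_mem_exteriorPower {n : ℕ} {x : ExteriorAlgebra R M} (hx : x ∈ ⋀[R]^n M) (k : ℕ) :
    x ^ k ∈ ⋀[R]^(n * k) M := by
  simpa [smul_eq_mul, mul_comm] using SetLike.pow_mem_graded (A := fun i : ℕ => ⋀[R]^i M) k hx

end ExteriorAlgebra

theorem exteriorPower_eq_bot_of_finrank_lt {K M : Type*} [Field K] [AddCommGroup M] [Module K M]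
    [FiniteDimensional K M] {n : ℕ} (hn : finrank K M < n) : ⋀[K]^n M = ⊥ := by
  rw [← Submodule.finrank_eq_zero, exteriorPower.finrank_eq, Nat.choose_eq_zero_of_lt hn]

section Polyforms

variable {V : Type*} [AddCommGroup V] [Module ℝ V] [FiniteDimensional ℝ V]

theorem eq_zero_of_mem_exteriorPower_of_finrank_lt {n : ℕ} (hn : finrank ℝ V < n)
    {x : ExteriorAlgebra ℝ (Dual ℝ V)} (hx : x ∈ ⋀[ℝ]^n (Dual ℝ V)) : x = 0 := by
  rwa [exteriorPower_eq_bot_of_finrank_lt (by rwa [Subspace.dual_finrank_eq]),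
    Submodule.mem_bot] at hx

noncomputable def lambdaOpLinear :
    ExteriorAlgebra ℝ (Dual ℝ V) →ₗ[ℝ] ExteriorAlgebra ℝ (Dual ℝ V) :=
  ∑ m ∈ Finset.range (finrank ℝ V + 1),
    ((-1 : ℝ) ^ (m / 2)) • GradedAlgebra.proj (fun i : ℕ => ⋀[ℝ]^i (Dual ℝ V)) m

theorem lambdaOpLinear_apply (Ψ : ExteriorAlgebra ℝ (Dual ℝ V)) :
    lambdaOpLinear Ψ = lambdaOp Ψ := by
  simp [lambdaOpLinear, lambdaOp]

theorem lambdaOp_zero : lambdaOp (0 : ExteriorAlgebra ℝ (Dual ℝ V)) = 0 := by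
  rw [← lambdaOpLinear_apply, map_zero]

theorem lambdaOp_add (x y : ExteriorAlgebra ℝ (Dual ℝ V)) :
    lambdaOp (x + y) = lambdaOp x + lambdaOp y := by
  simp only [← lambdaOpLinear_apply, map_add]

theorem lambdaOp_of_mem {n : ℕ} {x : ExteriorAlgebra ℝ (Dual ℝ V)}
    (hx : x ∈ ⋀[ℝ]^n (Dual ℝ V)) : lambdaOp x = ((-1 : ℝ) ^ (n / 2)) • x := by
  let 𝒜 := fun i : ℕ => ⋀[ℝ]^i (Dual ℝ V)
  by_cases hn : n ≤ finrank ℝ V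
  · rw [lambdaOp, Finset.sum_eq_single_of_mem n (Finset.mem_range.mpr (by omega))]
    · rw [GradedAlgebra.proj_apply, DirectSum.decompose_of_mem_same (ℳ := 𝒜) hx]
    · intro m _ hmn
      rw [GradedAlgebra.proj_apply, DirectSum.decompose_of_mem_ne (ℳ := 𝒜) hx (Ne.symm hmn),
        smul_zero]
  · rw [eq_zero_of_mem_exteriorPower_of_finrank_lt (by omega) hx, lambdaOp_zero, smul_zero]

theorem lambdaOp_pow_mul {ω : ExteriorAlgebra ℝ (Dual ℝ V)} (hω : ω ∈ ⋀[ℝ]^2 (Dual ℝ V))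
    (k : ℕ) (x : ExteriorAlgebra ℝ (Dual ℝ V)) :
    lambdaOp (ω ^ k * x) = (-ω) ^ k * lambdaOp x := by
  induction x using DirectSum.Decomposition.inductionOn (ℳ := fun i : ℕ => ⋀[ℝ]^i (Dual ℝ V)) with
  | zero => rw [mul_zero, lambdaOp_zero, mul_zero]
  | add x y hx hy => rw [mul_add, lambdaOp_add, lambdaOp_add, hx, hy, mul_add]
  | @homogeneous i x =>
    have hωk := ExteriorAlgebra.pow_mem_exteriorPower hω k
    rw [lambdaOp_of_mem (SetLike.mul_mem_graded hωk x.2), lambdaOp_of_mem x.2,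
      ← neg_one_smul ℝ ω, smul_pow, smul_mul_smul, ← pow_add,
      show (2 * k + i) / 2 = k + i / 2 by omega]

theorem lambdaOp_expForm_mul {ω : ExteriorAlgebra ℝ (Dual ℝ V)} (hω : ω ∈ ⋀[ℝ]^2 (Dual ℝ V))
    (Ψ : ExteriorAlgebra ℝ (Dual ℝ V)) :
    lambdaOp (expForm ω * Ψ) = expForm (-ω) * lambdaOp Ψ := by
  simp only [expForm, Finset.sum_mul, smul_mul_assoc, ← lambdaOpLinear_apply, map_sum, map_smul]
  simp only [lambdaOpLinear_apply, lambdaOp_pow_mul hω]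

theorem expForm_eq_exp {ω : ExteriorAlgebra ℝ (Dual ℝ V)} (hω : ω ^ (finrank ℝ V + 1) = 0) :
    expForm ω = IsNilpotent.exp ω := by
  rw [IsNilpotent.exp_eq_sum hω, expForm]
  refine Finset.sum_congr rfl fun k _ => ?_
  rw [← Rat.cast_smul_eq_qsmul ℝ]
  push_cast
  rfl

theorem pow_finrank_succ_eq_zero {ω : ExteriorAlgebra ℝ (Dual ℝ V)}
    (hω : ω ∈ ⋀[ℝ]^2 (Dual ℝ V)) : ω ^ (finrank ℝ V + 1) = 0 :=
  eq_zero_of_mem_exteriorPower_of_finrank_lt (by omega)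
    (ExteriorAlgebra.pow_mem_exteriorPower hω _)

theorem expForm_mul_expForm_neg {ω : ExteriorAlgebra ℝ (Dual ℝ V)}
    (hω : ω ∈ ⋀[ℝ]^2 (Dual ℝ V)) : expForm ω * expForm (-ω) = 1 := by
  rw [expForm_eq_exp (pow_finrank_succ_eq_zero hω),
    expForm_eq_exp (pow_finrank_succ_eq_zero (neg_mem hω)),
    IsNilpotent.exp_mul_exp_neg_self ⟨_, pow_finrank_succ_eq_zero hω⟩]

theorem commute_expForm {ω : ExteriorAlgebra ℝ (Dual ℝ V)} (hω : ω ∈ ⋀[ℝ]^2 (Dual ℝ V))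
    (x : ExteriorAlgebra ℝ (Dual ℝ V)) : Commute (expForm ω) x :=
  Commute.sum_left _ _ _ fun k _ =>
    ((ExteriorAlgebra.commute_of_mem_exteriorPower_of_even even_two hω x).pow_left k).smul_left _

end Polyforms

theorem statement7 {V : Type*} [AddCommGroup V] [Module ℝ V] [FiniteDimensional ℝ V]
    (ω : ExteriorAlgebra ℝ (Dual ℝ V)) (hω : ω ∈ ⋀[ℝ]^2 (Dual ℝ V))
    (Ω Ψ : ExteriorAlgebra ℝ (Dual ℝ V)) :
    mukaiPairing (expForm ω * Ω) (expForm ω * Ψ) = mukaiPairing Ω Ψ := by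
  have hcancel : expForm ω * Ω * expForm (-ω) = Ω := by
    rw [mul_assoc, ← (commute_expForm (neg_mem hω) Ω).eq, ← mul_assoc,
      expForm_mul_expForm_neg hω, one_mul]
  rw [mukaiPairing, lambdaOp_expForm_mul hω, ← mul_assoc, hcancel, mukaiPairing]
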